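/- arXiv:1812.05593 — 6 statements merged into one kernel-verified Lean document; each statement's English description precedes it below -/
import Mathlib

section
/- If ζ = (σ ≤ τ₀ ≥ σ₀ ≤ ⋯ ≤ τ_k ≥ σ_k ≤ τ) is a W-zigzag in which every face relation (forward and backward) lies in W⁺, then ζ represents an isomorphism in the localization Fc_W(M), with inverse represented by the reversed zigzag (τ ≤ τ ≥ σ_k ≤ τ_k ≥ ⋯ ≤ τ₀ ≥ σ ≤ σ). -/
open CategoryTheory

variable {M : Type} [PartialOrder M]

/-- A relation on a poset, viewed as a morphism property on its face-poset category. -/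
def mp (W : M → M → Prop) : MorphismProperty M := fun σ τ _ => W σ τ

/-- A `W`-zigzag in the face poset: an alternating sequence of forward face relations
and backward face relations, where backward relations must lie in
`W⁺ = W ∪ {identities}`. -/
inductive Zig (W : M → M → Prop) : M → M → Type
  | nil (σ : M) : Zig W σ σ
  | fwd {σ τ ν : M} (h : σ ≤ τ) (rest : Zig W τ ν) : Zig W σ ν
  | bwd {σ τ ν : M} (h : τ ≤ σ) (hw : W τ σ ∨ τ = σ) (rest : Zig W τ ν) : Zig W σ ν

/-- The inverse, in the localization, of a face relation lying in `W⁺`. -/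
noncomputable def backHom (W : M → M → Prop) {a b : M} (h : a ≤ b) (hw : W a b ∨ a = b) :
    (mp W).Q.obj b ⟶ (mp W).Q.obj a :=
  letI := Classical.dec (W a b)
  if hab : W a b then
    letI : IsIso ((mp W).Q.map (homOfLE h)) := (mp W).Q_inverts _ hab
    inv ((mp W).Q.map (homOfLE h))
  else
    (mp W).Q.map (homOfLE (le_of_eq (hw.resolve_left hab).symm))

/-- The morphism in the localization `Fc_W(M)` represented by a `W`-zigzag. -/
noncomputable def Zig.eval {W : M → M → Prop} :
    ∀ {σ τ : M}, Zig W σ τ → ((mp W).Q.obj σ ⟶ (mp W).Q.obj τ)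
  | _, _, .nil _ => 𝟙 _
  | _, _, .fwd h rest => (mp W).Q.map (homOfLE h) ≫ rest.eval
  | _, _, .bwd h hw rest => backHom W h hw ≫ rest.eval

/-- All forward face relations of a zigzag lie in `W⁺ = W ∪ {identities}`. -/
def Zig.allFwd {W : M → M → Prop} : ∀ {σ τ : M}, Zig W σ τ → Prop
  | _, _, .nil _ => True
  | _, _, .fwd (σ := a) (τ := b) _ rest => (W a b ∨ a = b) ∧ rest.allFwd
  | _, _, .bwd _ _ rest => rest.allFwd

/-- Concatenation of zigzags. -/
def Zig.comp {W : M → M → Prop} : ∀ {σ τ ν : M}, Zig W σ τ → Zig W τ ν → Zig W σ ν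
  | _, _, _, .nil _, z => z
  | _, _, _, .fwd h rest, z => .fwd h (rest.comp z)
  | _, _, _, .bwd h hw rest, z => .bwd h hw (rest.comp z)

/-- Reversal of a zigzag all of whose forward relations lie in `W⁺`. -/
def Zig.rev {W : M → M → Prop} :
    ∀ {σ τ : M} (z : Zig W σ τ), z.allFwd → Zig W τ σ
  | _, _, .nil a, _ => .nil a
  | _, _, .fwd h rest, hf => (rest.rev hf.2).comp (.bwd h hf.1 (.nil _))
  | _, _, .bwd h _ rest, hf => (rest.rev hf).comp (.fwd h (.nil _))

theorem CategoryTheory.comp_inverse_pair {C : Type*} [Category C] {X Y Z : C}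
    {f : X ⟶ Y} {g : Y ⟶ X} {p : Y ⟶ Z} {q : Z ⟶ Y}
    (hfg : f ≫ g = 𝟙 X ∧ g ≫ f = 𝟙 Y) (hpq : p ≫ q = 𝟙 Y ∧ q ≫ p = 𝟙 Z) :
    (f ≫ p) ≫ q ≫ g = 𝟙 X ∧ (q ≫ g) ≫ f ≫ p = 𝟙 Z :=
  let e := (Iso.mk f g hfg.1 hfg.2).trans (Iso.mk p q hpq.1 hpq.2)
  ⟨e.hom_inv_id, e.inv_hom_id⟩

lemma isIso_map_homOfLE (W : M → M → Prop) {a b : M} (h : a ≤ b) (hw : W a b ∨ a = b) :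
    IsIso ((mp W).Q.map (homOfLE h)) := by
  rcases hw with hw | rfl
  · exact (mp W).Q_inverts _ hw
  · rw [show homOfLE h = 𝟙 a from rfl, CategoryTheory.Functor.map_id]
    infer_instance

lemma backHom_eq_inv (W : M → M → Prop) {a b : M} (h : a ≤ b) (hw : W a b ∨ a = b) :
    haveI := isIso_map_homOfLE W h hw
    backHom W h hw = inv ((mp W).Q.map (homOfLE h)) := by
  have := isIso_map_homOfLE W h hw
  unfold backHom
  split
  · rfl
  · obtain rfl : a = b := hw.resolve_left ‹_›
    simp

lemma map_homOfLE_backHom_inverse_pair (W : M → M → Prop) {a b : M} (h : a ≤ b)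
    (hw : W a b ∨ a = b) :
    (mp W).Q.map (homOfLE h) ≫ backHom W h hw = 𝟙 _ ∧
      backHom W h hw ≫ (mp W).Q.map (homOfLE h) = 𝟙 _ := by
  have := isIso_map_homOfLE W h hw
  rw [backHom_eq_inv]
  exact ⟨IsIso.hom_inv_id _, IsIso.inv_hom_id _⟩

lemma Zig.eval_comp {W : M → M → Prop} {σ τ ν : M} (z : Zig W σ τ) (w : Zig W τ ν) :
    (z.comp w).eval = z.eval ≫ w.eval := by
  induction z with
  | nil => simp only [Zig.comp, Zig.eval, Category.id_comp]
  | fwd h rest ih => simp only [Zig.comp, Zig.eval, ih, Category.assoc]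
  | bwd h hw rest ih => simp only [Zig.comp, Zig.eval, ih, Category.assoc]

theorem allW_zigzag_iso_general (W : M → M → Prop)
    {σ τ : M} (ζ : Zig W σ τ) (hf : ζ.allFwd) :
    ζ.eval ≫ (ζ.rev hf).eval = 𝟙 _ ∧ (ζ.rev hf).eval ≫ ζ.eval = 𝟙 _ := by
  induction ζ with
  | nil => simp only [Zig.rev, Zig.eval, Category.id_comp, and_self]
  | fwd h rest ih =>
    simp only [Zig.rev, Zig.eval, Zig.eval_comp, Category.comp_id]
    exact comp_inverse_pair (map_homOfLE_backHom_inverse_pair W h hf.1) (ih hf.2)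
  | bwd h hw rest ih =>
    simp only [Zig.rev, Zig.eval, Zig.eval_comp, Category.comp_id]
    exact comp_inverse_pair (map_homOfLE_backHom_inverse_pair W h hw).symm (ih hf)

/-- a `W`-zigzag all of whose face relations (forward and backward) lie
in `W⁺` represents an isomorphism in the localization `Fc_W(M)`, with inverse
represented by the reversed zigzag. -/
theorem allW_zigzag_iso (W : M → M → Prop)
    (hface : ∀ σ τ, W σ τ → σ ≤ τ)
    (hclosed : ∀ σ τ ν, W σ τ → W τ ν → W σ ν)
    {σ τ : M} (ζ : Zig W σ τ) (hf : ζ.allFwd) :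
    ζ.eval ≫ (ζ.rev hf).eval = 𝟙 _ ∧ (ζ.rev hf).eval ≫ ζ.eval = 𝟙 _ :=
  allW_zigzag_iso_general W ζ hf
end

section
/- Let S be the isomorphism class in Fc_W(M) of an m-dimensional simplex σ of an m-dimensional simplicial complex M, where W is defined from a bisheaf F as above. Then S is upward closed: if τ ∈ S and τ ≤ τ', then τ' ∈ S. -/
open CategoryTheory

structure Bisheaf (M : Type) [PartialOrder M] where
  shf : M ⥤ AddCommGrpCat
  csh : Mᵒᵖ ⥤ AddCommGrpCat
  F : ∀ σ : M, shf.obj σ ⟶ csh.obj (Opposite.op σ)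
  compat : ∀ {σ τ : M} (h : σ ≤ τ),
    shf.map (homOfLE h) ≫ F τ ≫ csh.map (homOfLE h).op = F σ

variable {M : Type} [PartialOrder M]

/-- The set `E` of face relations to which the bisheaf assigns isomorphisms. -/
def Bisheaf.E (B : Bisheaf M) (σ τ : M) : Prop :=
  ∃ h : σ ≤ τ, IsIso (B.shf.map (homOfLE h)) ∧ IsIso (B.csh.map (homOfLE h).op)

/-- The collection `W = {(σ ≤ τ) ∈ E | σ ∈ U}`, where
`U = {σ | (σ ≤ ρ) ∈ E for every ρ in the open star of σ}`. -/
def Bisheaf.W (B : Bisheaf M) (σ τ : M) : Prop :=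
  σ ≤ τ ∧ ∀ ρ, σ ≤ ρ → B.E σ ρ

/-- Two simplices are isomorphic in the localization `Fc_W(M)` of the face poset. -/
def isoIn (W : M → M → Prop) (σ τ : M) : Prop :=
  Nonempty ((mp W).Q.obj σ ≅ (mp W).Q.obj τ)

/-! Write `W = {a ≤ b | a ∈ U}`. When `σ ∈ U`, the class of `σ` in the localization is
`{ρ | some u ∈ U with u ≤ ρ is isomorphic to σ}`: this predicate holds at `σ`, is monotone and is
reflected along `W`-arrows, so it factors through the localization as a functor to `Prop` and is
constant on isomorphism classes. Upward closure is then immediate, and a top-dimensional simplex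
lies in `U` because its only coface is itself. -/

theorem isoIn_equivalence (W : M → M → Prop) : Equivalence (isoIn W) :=
  ⟨fun _ => ⟨Iso.refl _⟩, fun ⟨i⟩ => ⟨i.symm⟩, fun ⟨i⟩ ⟨j⟩ => ⟨i ≪≫ j⟩⟩

section Localization

variable {W : M → M → Prop}

theorem isoIn_of_le_of_rel {a b : M} (hab : a ≤ b) (h : W a b) : isoIn W a b :=
  haveI := (mp W).Q_inverts (homOfLE hab) h
  ⟨asIso ((mp W).Q.map (homOfLE hab))⟩

theorem iff_of_isoIn {P : M → Prop} (hmono : Monotone P) (hback : ∀ a b, W a b → P b → P a)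
    {a b : M} (h : isoIn W a b) : P a ↔ P b := by
  obtain ⟨i⟩ := h
  have hinv : (mp W).IsInvertedBy hmono.functor := fun a b _ hab =>
    ⟨homOfLE (hback a b hab), Subsingleton.elim _ _, Subsingleton.elim _ _⟩
  let L := Localization.Construction.lift hmono.functor hinv
  have hfac : (mp W).Q ⋙ L = hmono.functor := Localization.Construction.fac _ _
  have hL : ∀ ρ, L.obj ((mp W).Q.obj ρ) = P ρ := Functor.congr_obj hfac
  rw [← hL a, ← hL b]
  exact ⟨leOfHom (L.map i.hom), leOfHom (L.map i.inv)⟩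

end Localization

def leFrom (U : M → Prop) (a b : M) : Prop := a ≤ b ∧ U a

section LeFrom

variable {U : M → Prop}

theorem isoIn_leFrom_of_le {u ρ : M} (hu : U u) (h : u ≤ ρ) : isoIn (leFrom U) u ρ :=
  isoIn_of_le_of_rel h ⟨h, hu⟩

theorem isoIn_leFrom_iff_exists_le {σ : M} (hσ : U σ) {ρ : M} :
    isoIn (leFrom U) ρ σ ↔ ∃ u ≤ ρ, U u ∧ isoIn (leFrom U) u σ := by
  have hW := isoIn_equivalence (leFrom U)
  refine ⟨fun hρ => ?_, fun ⟨u, hu, hU, hiso⟩ =>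
    hW.trans (hW.symm (isoIn_leFrom_of_le hU hu)) hiso⟩
  refine (iff_of_isoIn (P := fun ρ => ∃ u ≤ ρ, U u ∧ isoIn (leFrom U) u σ) ?_ ?_ hρ).2
    ⟨σ, le_rfl, hσ, hW.refl σ⟩
  · exact fun _ _ hρ ⟨u, hu, hU, hiso⟩ => ⟨u, hu.trans hρ, hU, hiso⟩
  · rintro a b ⟨hab, ha⟩ ⟨u, hub, hu, hiso⟩
    have hbσ := hW.trans (hW.symm (isoIn_leFrom_of_le hu hub)) hiso
    exact ⟨a, le_rfl, ha, hW.trans (isoIn_leFrom_of_le ha hab) hbσ⟩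

theorem isoIn_leFrom_upward_closed {σ : M} (hσ : U σ) {τ τ' : M}
    (hτ : isoIn (leFrom U) τ σ) (h : τ ≤ τ') : isoIn (leFrom U) τ' σ :=
  have ⟨u, hu, hU, hiso⟩ := (isoIn_leFrom_iff_exists_le hσ).1 hτ
  (isoIn_leFrom_iff_exists_le hσ).2 ⟨u, hu.trans h, hU, hiso⟩

end LeFrom

theorem Bisheaf.E_refl (B : Bisheaf M) (σ : M) : B.E σ σ :=
  ⟨le_rfl, Functor.map_isIso B.shf (𝟙 σ), Functor.map_isIso B.csh (𝟙 σ).op⟩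

/-- the isomorphism class `S` in `Fc_W(M)` of a top-dimensional
(`m`-dimensional) simplex `σ` of an `m`-dimensional simplicial complex `M` is
upward closed: if `τ ∈ S` and `τ ≤ τ'` then `τ' ∈ S`. -/
theorem top_iso_class_upward_closed (B : Bisheaf M) (dim : M → ℕ) (m : ℕ)
    (hstrict : ∀ σ τ : M, σ < τ → dim σ < dim τ)
    (hbound : ∀ σ : M, dim σ ≤ m)
    {σ : M} (hσ : dim σ = m)
    {τ τ' : M} (hτ : isoIn B.W τ σ) (h : τ ≤ τ') :
    isoIn B.W τ' σ := by
  have hmax : ∀ ρ, σ ≤ ρ → ρ = σ := fun ρ hρ =>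
    hρ.lt_or_eq.elim (fun hlt => absurd (hbound ρ) (hσ ▸ hstrict σ ρ hlt).not_ge) Eq.symm
  exact isoIn_leFrom_upward_closed (fun ρ hρ => hmax ρ hρ ▸ B.E_refl σ) hτ h
end

section
/- If two simplices τ ≤ τ' both lie in the isomorphism class S (in Fc_W(M)) of an m-dimensional simplex σ of M, then the restriction map F̂(τ ≤ τ') and the extension map F̌(τ ≤ τ') are both isomorphisms. -/
/-!
An `m`-simplex has no proper cofaces, so it lies in `U`. Since `E` satisfies two-out-of-three,
`U` is an upper set; as every arrow of `W` starts in `U`, membership in `U` is a functor to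
`Prop` inverting `W`, hence constant on isomorphism classes of `Fc_W(M)`. So `τ ∈ U`, and
`τ ≤ τ'` lies in `E`.
-/

open CategoryTheory

variable {M : Type} [PartialOrder M]

theorem StrictMono.isMax_of_forall_apply_le {α β : Type*} [Preorder α] [Preorder β] {f : α → β}
    (hf : StrictMono f) {a : α} (h : ∀ b, f b ≤ f a) : IsMax a :=
  fun b hab => by_contra fun hba => (hf (lt_of_le_not_ge hab hba)).not_ge (h b)

/-- Membership in `s` is a functor to `Prop` inverting `W`, so it factors through the
localization. -/
theorem IsUpperSet.mem_iff_of_isoIn {s : Set M} (hs : IsUpperSet s) {W : M → M → Prop}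
    (hW : ∀ σ τ, W σ τ → τ ∈ s → σ ∈ s) {σ τ : M} (h : isoIn W σ τ) : σ ∈ s ↔ τ ∈ s := by
  obtain ⟨e⟩ := h
  let P : M ⥤ Prop := Monotone.functor fun _ _ hab => hs hab
  have hP : (mp W).IsInvertedBy P := fun σ τ f hf =>
    ⟨homOfLE (hW σ τ hf), Subsingleton.elim _ _, Subsingleton.elim _ _⟩
  let e' : P.obj σ ≅ P.obj τ := (Localization.Construction.lift P hP).mapIso e
  exact ⟨leOfHom e'.hom, leOfHom e'.inv⟩

namespace Bisheaf

variable (B : Bisheaf M)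

def U : Set M := {σ | ∀ ρ, σ ≤ ρ → B.E σ ρ}

theorem E_refl_s7 (σ : M) : B.E σ σ := by
  refine ⟨le_rfl, ?_, ?_⟩
  · rw [show homOfLE (le_refl σ) = 𝟙 σ from rfl, B.shf.map_id]
    infer_instance
  · rw [show (homOfLE (le_refl σ)).op = 𝟙 (Opposite.op σ) from rfl, B.csh.map_id]
    infer_instance

variable {B}

theorem E.of_E_of_le {σ τ ρ : M} (hστ : B.E σ τ) (hσρ : B.E σ ρ) (hτρ : τ ≤ ρ) : B.E τ ρ := by
  obtain ⟨hστ, hshf₁, hcsh₁⟩ := hστ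
  obtain ⟨_, hshf₂, hcsh₂⟩ := hσρ
  refine ⟨hτρ, ?_, ?_⟩
  · rw [show homOfLE (hστ.trans hτρ) = homOfLE hστ ≫ homOfLE hτρ from rfl,
      B.shf.map_comp] at hshf₂
    exact IsIso.of_isIso_comp_left (B.shf.map (homOfLE hστ)) _
  · rw [show (homOfLE (hστ.trans hτρ)).op = (homOfLE hτρ).op ≫ (homOfLE hστ).op from rfl,
      B.csh.map_comp] at hcsh₂
    exact IsIso.of_isIso_comp_right _ (B.csh.map (homOfLE hστ).op)

theorem isUpperSet_U : IsUpperSet B.U := fun _ _ hστ hσ ρ hτρ =>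
  (hσ _ hστ).of_E_of_le (hσ ρ (hστ.trans hτρ)) hτρ

theorem mem_U_of_isMax {σ : M} (hσ : IsMax σ) : σ ∈ B.U := fun _ hσρ =>
  (hσ.eq_of_le hσρ) ▸ B.E_refl_s7 σ

theorem mem_U_iff_of_isoIn {σ τ : M} (h : isoIn B.W σ τ) : σ ∈ B.U ↔ τ ∈ B.U :=
  isUpperSet_U.mem_iff_of_isoIn (fun _ _ hW _ => hW.2) h

end Bisheaf

theorem constructible_on_top_class_general (B : Bisheaf M) (dim : M → ℕ) (m : ℕ)
    (hstrict : ∀ σ τ : M, σ < τ → dim σ < dim τ)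
    (hbound : ∀ σ : M, dim σ ≤ m)
    {σ : M} (hσ : dim σ = m)
    {τ τ' : M} (hτ : isoIn B.W τ σ) (h : τ ≤ τ') :
    IsIso (B.shf.map (homOfLE h)) ∧ IsIso (B.csh.map (homOfLE h).op) := by
  have hσmax : IsMax σ :=
    StrictMono.isMax_of_forall_apply_le (fun _ _ => hstrict _ _) (hσ ▸ hbound)
  have hτU : τ ∈ B.U := (Bisheaf.mem_U_iff_of_isoIn hτ).2 (Bisheaf.mem_U_of_isMax hσmax)
  obtain ⟨_, hshf, hcsh⟩ := hτU τ' h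
  exact ⟨hshf, hcsh⟩

/-- if `τ ≤ τ'` both lie in the isomorphism class `S` (in `Fc_W(M)`)
of an `m`-dimensional simplex `σ` of the `m`-dimensional complex `M`, then the
restriction map `F̂(τ ≤ τ')` and the extension map `F̌(τ ≤ τ')` are isomorphisms. -/
theorem constructible_on_top_class (B : Bisheaf M) (dim : M → ℕ) (m : ℕ)
    (hstrict : ∀ σ τ : M, σ < τ → dim σ < dim τ)
    (hbound : ∀ σ : M, dim σ ≤ m)
    {σ : M} (hσ : dim σ = m)
    {τ τ' : M} (hτ : isoIn B.W τ σ) (hτ' : isoIn B.W τ' σ) (h : τ ≤ τ') :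
    IsIso (B.shf.map (homOfLE h)) ∧ IsIso (B.csh.map (homOfLE h).op) :=
  constructible_on_top_class_general B dim m hstrict hbound hσ hτ h
end

section
/- Every simplex τ lying in an m-dimensional stratum of any F-stratification of an m-dimensional simplicial complex M is isomorphic, in the localization Fc_W(M), to some m-dimensional simplex of M. -/
/-!
No stratum has dimension above `m`, so by the frontier axiom every coface of a simplex in an
`m`-dimensional stratum stays in that stratum; constructibility then puts every face relation
out of such a simplex in `E`, hence in `W`. The stratum is connected by zigzags of face
relations, each of which becomes an isomorphism in the localization, and it contains a simplex
of dimension `m`.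
-/

open CategoryTheory

variable {M : Type} [PartialOrder M]

/-- An `F`-stratification of `M`, presented by a labelling `lbl : M → Λ` of simplices
by strata and a dimension `sdim` for each stratum.  The axioms are:
connectedness of strata (via zigzags of face relations within a stratum),
the dimension axiom (the maximal dimension of simplices in a stratum is its dimension),
the frontier axiom (adjacency of strata is graded by dimension, with equality of
dimensions only within a stratum), and constructibility (the bisheaf assigns
isomorphisms to face relations within a stratum). -/
structure IsFStrat (B : Bisheaf M) (dim : M → ℕ) {Λ : Type} (lbl : M → Λ)
    (sdim : Λ → ℕ) : Prop where
  connected : ∀ σ τ : M, lbl σ = lbl τ →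
    Relation.ReflTransGen (fun a b => lbl a = lbl σ ∧ lbl b = lbl σ ∧ (a ≤ b ∨ b ≤ a)) σ τ
  dim_le : ∀ σ : M, dim σ ≤ sdim (lbl σ)
  dim_attained : ∀ σ : M, ∃ τ : M, lbl τ = lbl σ ∧ dim τ = sdim (lbl σ)
  frontier : ∀ σ τ : M, σ ≤ τ → lbl σ = lbl τ ∨ sdim (lbl σ) < sdim (lbl τ)
  constructible : ∀ (σ τ : M) (h : σ ≤ τ), lbl σ = lbl τ →
    IsIso (B.shf.map (homOfLE h)) ∧ IsIso (B.csh.map (homOfLE h).op)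

theorem isoIn_of_le {W : M → M → Prop} {σ τ : M} (h : σ ≤ τ) (hW : W σ τ) : isoIn W σ τ :=
  ⟨Localization.isoOfHom (mp W).Q (mp W) (homOfLE h) hW⟩

namespace IsFStrat

variable {B : Bisheaf M} {dim : M → ℕ} {Λ : Type} {lbl : M → Λ} {sdim : Λ → ℕ}

theorem sdim_le (hstrat : IsFStrat B dim lbl sdim) {m : ℕ} (hbound : ∀ σ, dim σ ≤ m) (σ : M) :
    sdim (lbl σ) ≤ m := by
  obtain ⟨τ, hτ, hdim⟩ := hstrat.dim_attained σ
  exact hdim ▸ hbound τ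

theorem lbl_eq_of_le_of_sdim_maximal (hstrat : IsFStrat B dim lbl sdim) {σ τ : M}
    (hmax : ∀ ρ, sdim (lbl ρ) ≤ sdim (lbl σ)) (h : σ ≤ τ) : lbl σ = lbl τ :=
  (hstrat.frontier σ τ h).resolve_right (hmax τ).not_gt

theorem W_of_le_of_sdim_maximal (hstrat : IsFStrat B dim lbl sdim) {σ τ : M}
    (hmax : ∀ ρ, sdim (lbl ρ) ≤ sdim (lbl σ)) (h : σ ≤ τ) : B.W σ τ :=
  ⟨h, fun ρ hρ => ⟨hρ, hstrat.constructible σ ρ hρ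
    (hstrat.lbl_eq_of_le_of_sdim_maximal hmax hρ)⟩⟩

theorem isoIn_W_of_sdim_maximal (hstrat : IsFStrat B dim lbl sdim) {σ τ : M}
    (hmax : ∀ ρ, sdim (lbl ρ) ≤ sdim (lbl σ)) (hστ : lbl σ = lbl τ) : isoIn B.W σ τ := by
  have hmax' : ∀ {a}, lbl a = lbl σ → ∀ ρ, sdim (lbl ρ) ≤ sdim (lbl a) :=
    fun ha ρ => ha ▸ hmax ρ
  refine Relation.reflTransGen_le_of_equivalence_of_le (isoIn_equivalence B.W) ?_ σ τ
    (hstrat.connected σ τ hστ)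
  rintro a b ⟨ha, hb, hab | hba⟩
  · exact isoIn_of_le hab (hstrat.W_of_le_of_sdim_maximal (hmax' ha) hab)
  · exact (isoIn_equivalence B.W).symm
      (isoIn_of_le hba (hstrat.W_of_le_of_sdim_maximal (hmax' hb) hba))

end IsFStrat

theorem top_stratum_iso_to_top_simplex_general (B : Bisheaf M) (dim : M → ℕ) (m : ℕ)
    (hbound : ∀ σ : M, dim σ ≤ m)
    {Λ : Type} {lbl : M → Λ} {sdim : Λ → ℕ}
    (hstrat : IsFStrat B dim lbl sdim)
    {τ : M} (hτ : sdim (lbl τ) = m) :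
    ∃ σ : M, dim σ = m ∧ isoIn B.W τ σ := by
  obtain ⟨σ, hlbl, hdim⟩ := hstrat.dim_attained τ
  refine ⟨σ, hdim.trans hτ, hstrat.isoIn_W_of_sdim_maximal (fun ρ => ?_) hlbl.symm⟩
  exact hτ ▸ hstrat.sdim_le hbound ρ

/-- every simplex `τ` lying in an `m`-dimensional stratum of any
`F`-stratification of the `m`-dimensional complex `M` is isomorphic, in the
localization `Fc_W(M)`, to some `m`-dimensional simplex of `M`. -/
theorem top_stratum_iso_to_top_simplex (B : Bisheaf M) (dim : M → ℕ) (m : ℕ)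
    (hstrict : ∀ σ τ : M, σ < τ → dim σ < dim τ)
    (hbound : ∀ σ : M, dim σ ≤ m)
    {Λ : Type} {lbl : M → Λ} {sdim : Λ → ℕ}
    (hstrat : IsFStrat B dim lbl sdim)
    {τ : M} (hτ : sdim (lbl τ) = m) :
    ∃ σ : M, dim σ = m ∧ isoIn B.W τ σ :=
  top_stratum_iso_to_top_simplex_general B dim m hbound hstrat hτ
end

section
/- For each d ∈ {0,1,…,m}, there is no morphism in the localization Fc_{W_d}(M) from any simplex σ ∈ M − M_d to any simplex τ ∈ M_d. -/
open CategoryTheory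

variable {M : Type} [PartialOrder M]

/-- `U` relative to a subcomplex `A`: simplices of `A` all of whose face relations
within the open star in `A` lie in `E`. -/
def Uof (E : M → M → Prop) (A : Set M) : Set M :=
  {σ | σ ∈ A ∧ ∀ τ ∈ A, σ ≤ τ → E σ τ}

/-- Enlarge a collection of face relations by all relations out of members of
`Uof E A` into the open star within `A`. -/
def Wadd (E : M → M → Prop) (A : Set M) (Wp : M → M → Prop) : M → M → Prop :=
  fun σ τ => Wp σ τ ∨ (σ ∈ Uof E A ∧ τ ∈ A ∧ σ ≤ τ)

/-- One step of the iterative construction: delete from `P.1` all simplices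
isomorphic in the localization about `P.2` to a `(d+1)`-dimensional simplex. -/
def stepM (dim : M → ℕ) (P : Set M × (M → M → Prop)) (d : ℕ) : Set M :=
  {σ | σ ∈ P.1 ∧ ¬ ∃ τ : M, dim τ = d + 1 ∧ isoIn P.2 σ τ}

/-- One step `(M_{d+1}, W_{d+1}) ↦ (M_d, W_d)` of the iterative construction. -/
def step (E : M → M → Prop) (dim : M → ℕ) (P : Set M × (M → M → Prop)) (d : ℕ) :
    Set M × (M → M → Prop) :=
  (stepM dim P d, Wadd E (stepM dim P d) P.2)

/-- The iterative construction, indexed by the number `j` of steps performed: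
`seq E dim m j = (M_{m-j}, W_{m-j})`, starting from `(M_m, W_m) = (M, W)`. -/
def seq (E : M → M → Prop) (dim : M → ℕ) (m : ℕ) : ℕ → Set M × (M → M → Prop)
  | 0 => (Set.univ, Wadd E Set.univ (fun _ _ => False))
  | j + 1 => step E dim (seq E dim m j) (m - (j + 1))

/-- The subcomplex `M_d` of the iterative construction. -/
def Mseq (B : Bisheaf M) (dim : M → ℕ) (m d : ℕ) : Set M := (seq B.E dim m (m - d)).1

/-- The collection `W_d` of face relations of the iterative construction. -/
def Wseq (B : Bisheaf M) (dim : M → ℕ) (m d : ℕ) : M → M → Prop := (seq B.E dim m (m - d)).2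

/-!
Along the construction, `M_k` stays a down-set of the face poset and every `W_k`-arrow joins
two simplices that are both in or both outside `M_k`. Membership in the complement of `M_d` is
then a monotone predicate inverted by `W_d`, so it factors through the localization, and a
morphism `σ ⟶ τ` would carry `σ ∉ M_d` to `τ ∉ M_d`.

Down-closure survives a step as follows. Let `σ < τ` with `τ ∈ M_d`. If some `W`-arrow starts
below `σ`, the star property makes `σ` and `τ` isomorphic, so `σ` is kept with `τ`. Otherwise
the localization cannot enlarge the down-set of `σ`: whatever is isomorphic to `σ` is a face
of `σ`, of dimension at most `dim σ < dim τ ≤ d`, hence never a `(d+1)`-simplex.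
-/

namespace FaceLocalization

variable {W : M → M → Prop}

theorem isoIn_refl (W : M → M → Prop) (σ : M) : isoIn W σ σ := ⟨Iso.refl _⟩

theorem isoIn.symm {σ τ : M} (h : isoIn W σ τ) : isoIn W τ σ := ⟨h.some.symm⟩

theorem isoIn.trans {σ τ ρ : M} (h₁ : isoIn W σ τ) (h₂ : isoIn W τ ρ) : isoIn W σ ρ :=
  ⟨h₁.some.trans h₂.some⟩

theorem isoIn_of_W {σ τ : M} (hle : σ ≤ τ) (hw : W σ τ) : isoIn W σ τ :=
  ⟨Localization.Construction.wIso (homOfLE hle) hw⟩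

theorem mem_of_hom {S : Set M} (hS : IsUpperSet S) (hW : ∀ x y, W x y → y ∈ S → x ∈ S)
    {σ τ : M} (φ : (mp W).Q.obj σ ⟶ (mp W).Q.obj τ) (hσ : σ ∈ S) : τ ∈ S := by
  let F : M ⥤ Prop := (Set.monotone_mem.2 hS).functor
  have hF : (mp W).IsInvertedBy F := fun x y f hf =>
    (PartialOrder.isIso_iff_eq _).2 (propext ⟨(F.map f).le, hW x y hf⟩)
  have hfac := Localization.Construction.fac F hF
  let L := Localization.Construction.lift F hF
  exact (eqToHom (Functor.congr_obj hfac σ).symm ≫ L.map φ ≫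
    eqToHom (Functor.congr_obj hfac τ)).le hσ

theorem le_of_hom_of_forall_not_W {σ ρ : M} (hσ : ∀ u x, u ≤ σ → ¬ W u x)
    (φ : (mp W).Q.obj ρ ⟶ (mp W).Q.obj σ) : ρ ≤ σ := by
  by_contra hρ
  exact mem_of_hom (S := (Set.Iic σ)ᶜ) (isLowerSet_Iic σ).compl
    (fun x y hxy _ hx => hσ x y hx hxy) φ hρ le_rfl

end FaceLocalization

open FaceLocalization

/-- The invariants of a pair `P = (M_k, W_k)` of the iterative construction. -/
structure IsStage (dim : M → ℕ) (k : ℕ) (P : Set M × (M → M → Prop)) : Prop where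
  le_of_W : ∀ {σ τ}, P.2 σ τ → σ ≤ τ
  W_of_W_of_le : ∀ {σ τ τ'}, P.2 σ τ → σ ≤ τ' → τ' ∈ P.1 → P.2 σ τ'
  mem_iff_of_W : ∀ {σ τ}, P.2 σ τ → (σ ∈ P.1 ↔ τ ∈ P.1)
  isLowerSet : IsLowerSet P.1
  dim_le : ∀ σ ∈ P.1, dim σ ≤ k

section Step

variable {E : M → M → Prop} {dim : M → ℕ} {P : Set M × (M → M → Prop)} {d : ℕ}

theorem mem_stepM_iff_of_isoIn {σ τ : M} (hiso : isoIn P.2 σ τ) (hmem : σ ∈ P.1 ↔ τ ∈ P.1) :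
    σ ∈ stepM dim P d ↔ τ ∈ stepM dim P d := by
  have hisoρ : ∀ ρ, isoIn P.2 σ ρ ↔ isoIn P.2 τ ρ := fun ρ => ⟨hiso.symm.trans, hiso.trans⟩
  simp only [stepM, Set.mem_ofPred_eq, hmem, hisoρ]

theorem dim_le_of_mem_stepM (h : ∀ σ ∈ P.1, dim σ ≤ d + 1) {σ : M} (hσ : σ ∈ stepM dim P d) :
    dim σ ≤ d := by
  by_contra hlt
  exact hσ.2 ⟨σ, by have := h σ hσ.1; omega, isoIn_refl _ σ⟩

theorem IsStage.isLowerSet_stepM (hdim : StrictMono dim) (hP : IsStage dim (d + 1) P) :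
    IsLowerSet (stepM dim P d) := by
  intro τ σ hle hτ
  have hσ : σ ∈ P.1 := hP.isLowerSet hle hτ.1
  rcases hle.eq_or_lt with rfl | hlt
  · exact hτ
  by_cases hW : ∃ u x, u ≤ σ ∧ P.2 u x
  · obtain ⟨u, x, hu, hux⟩ := hW
    have huσ := hP.W_of_W_of_le hux hu hσ
    have huτ := hP.W_of_W_of_le hux (hu.trans hle) hτ.1
    have hiso : isoIn P.2 σ τ :=
      (isoIn_of_W hu huσ).symm.trans (isoIn_of_W (hu.trans hle) huτ)
    exact (mem_stepM_iff_of_isoIn hiso (iff_of_true hσ hτ.1)).2 hτ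
  · push Not at hW
    refine ⟨hσ, fun ⟨ρ, hρ, hiso⟩ => ?_⟩
    have hρσ : ρ ≤ σ := le_of_hom_of_forall_not_W hW hiso.some.inv
    have := hdim.monotone hρσ
    have := hdim hlt
    have := dim_le_of_mem_stepM hP.dim_le hτ
    omega

theorem IsStage.step (hdim : StrictMono dim) (hP : IsStage dim (d + 1) P) :
    IsStage dim d (step E dim P d) where
  le_of_W := by
    rintro σ τ (h | ⟨-, -, h⟩)
    exacts [hP.le_of_W h, h]
  W_of_W_of_le := by
    rintro σ τ τ' (h | ⟨hU, -, -⟩) hle hτ'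
    exacts [Or.inl (hP.W_of_W_of_le h hle hτ'.1), Or.inr ⟨hU, hτ', hle⟩]
  mem_iff_of_W := by
    rintro σ τ (h | ⟨hU, hτ, -⟩)
    exacts [mem_stepM_iff_of_isoIn (isoIn_of_W (hP.le_of_W h) h) (hP.mem_iff_of_W h),
      iff_of_true hU.1 hτ]
  isLowerSet := hP.isLowerSet_stepM hdim
  dim_le _ := dim_le_of_mem_stepM hP.dim_le

end Step

section Seq

variable {E : M → M → Prop} {dim : M → ℕ} {m : ℕ}

theorem isStage_seq_zero (hbound : ∀ σ, dim σ ≤ m) : IsStage dim m (seq E dim m 0) where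
  le_of_W := by
    rintro σ τ (h | ⟨-, -, h⟩)
    exacts [h.elim, h]
  W_of_W_of_le := by
    rintro σ τ τ' (h | ⟨hU, -, -⟩) hle -
    exacts [h.elim, Or.inr ⟨hU, trivial, hle⟩]
  mem_iff_of_W _ := iff_of_true trivial trivial
  isLowerSet := isLowerSet_univ
  dim_le σ _ := hbound σ

theorem isStage_seq (hdim : StrictMono dim) (hbound : ∀ σ, dim σ ≤ m) :
    ∀ j ≤ m, IsStage dim (m - j) (seq E dim m j)
  | 0, _ => isStage_seq_zero hbound
  | j + 1, hj => by
    have h := isStage_seq hdim hbound j (by omega)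
    rw [show m - j = m - (j + 1) + 1 by omega] at h
    exact h.step hdim

end Seq

theorem no_morphism_into_Md_general (B : Bisheaf M) (dim : M → ℕ) (m : ℕ)
    (hstrict : ∀ σ τ : M, σ < τ → dim σ < dim τ)
    (hbound : ∀ σ : M, dim σ ≤ m)
    (d : ℕ)
    {σ τ : M} (hσ : σ ∉ Mseq B dim m d) (hτ : τ ∈ Mseq B dim m d) :
    IsEmpty ((mp (Wseq B dim m d)).Q.obj σ ⟶ (mp (Wseq B dim m d)).Q.obj τ) := by
  have hP : IsStage dim (m - (m - d)) (seq B.E dim m (m - d)) :=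
    isStage_seq (fun _ _ h => hstrict _ _ h) hbound (m - d) (Nat.sub_le m d)
  exact ⟨fun φ => mem_of_hom (S := (Mseq B dim m d)ᶜ) hP.isLowerSet.compl
    (fun x y hxy hy hx => hy ((hP.mem_iff_of_W hxy).1 hx)) φ hσ hτ⟩

/-- for each `d ∈ {0,…,m}` there is no morphism in the localization
`Fc_{W_d}(M)` from any simplex `σ ∈ M − M_d` to any simplex `τ ∈ M_d`. -/
theorem no_morphism_into_Md (B : Bisheaf M) (dim : M → ℕ) (m : ℕ)
    (hstrict : ∀ σ τ : M, σ < τ → dim σ < dim τ)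
    (hbound : ∀ σ : M, dim σ ≤ m)
    (d : ℕ) (hd : d ≤ m)
    {σ τ : M} (hσ : σ ∉ Mseq B dim m d) (hτ : τ ∈ Mseq B dim m d) :
    IsEmpty ((mp (Wseq B dim m d)).Q.obj σ ⟶ (mp (Wseq B dim m d)).Q.obj τ) :=
  no_morphism_into_Md_general B dim m hstrict hbound d hσ hτ
end

section
/- Let W be a closed collection of face relations in the face poset of a simplicial complex M, and suppose every relation in W has the form (σ ≤ τ) with σ ∈ U for some upward-closed set of simplices U such that all face relations out of members of U lie in W. If ζ is a W-zigzag from σ to τ whose underlying simplices after the first all lie in the open star of some member of U, and the first forward relation in ζ is an equality, then ζ represents an isomorphism in Fc_W(M). -/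
open CategoryTheory

variable {M : Type} [PartialOrder M]

/-- The set of simplices appearing in a zigzag. -/
def Zig.verts {W : M → M → Prop} : ∀ {σ τ : M}, Zig W σ τ → Set M
  | _, _, .nil a => {a}
  | _, _, .fwd (σ := a) _ rest => insert a rest.verts
  | _, _, .bwd (σ := a) _ _ rest => insert a rest.verts

instance isIso_backHom (W : M → M → Prop) {a b : M} (h : a ≤ b) (hw : W a b ∨ a = b) :
    IsIso (backHom W h hw) := by
  unfold backHom
  split_ifs with hab
  · have : IsIso ((mp W).Q.map (homOfLE h)) := (mp W).Q_inverts _ hab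
    infer_instance
  · obtain rfl := hw.resolve_left hab
    simp only [homOfLE_refl]
    infer_instance

/-- Backward steps are invertible in any case; each forward step starts at a vertex of the
zigzag, so it lies in `W` and is inverted by the localization. -/
theorem Zig.isIso_eval_of_verts_subset {W : M → M → Prop} {U : Set M}
    (hUW : ∀ σ τ : M, σ ∈ U → σ ≤ τ → W σ τ) {σ τ : M} (z : Zig W σ τ)
    (hz : z.verts ⊆ U) : IsIso z.eval := by
  induction z with
  | nil => exact inferInstanceAs (IsIso (𝟙 _))
  | @fwd a b _ h rest ih =>
    have : IsIso ((mp W).Q.map (homOfLE h)) :=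
      (mp W).Q_inverts _ (hUW a b (hz (Set.mem_insert _ _)) h)
    have : IsIso rest.eval := ih ((Set.subset_insert _ _).trans hz)
    exact inferInstanceAs (IsIso (_ ≫ rest.eval))
  | bwd h hw rest ih =>
    have : IsIso rest.eval := ih ((Set.subset_insert _ _).trans hz)
    exact inferInstanceAs (IsIso (backHom W h hw ≫ rest.eval))

theorem reduced_star_zigzag_iso_general (W : M → M → Prop) (U : Set M)
    (hUup : ∀ σ σ' : M, σ ∈ U → σ ≤ σ' → σ' ∈ U)
    (hUW : ∀ σ τ : M, σ ∈ U → σ ≤ τ → W σ τ)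
    {σ τ : M} (rest : Zig W σ τ)
    (hverts : ∀ ρ ∈ rest.verts, ∃ u ∈ U, u ≤ ρ) :
    IsIso (Zig.fwd (le_refl σ) rest).eval := by
  have hrest : rest.verts ⊆ U := fun ρ hρ ↦
    let ⟨u, hu, huρ⟩ := hverts ρ hρ
    hUup u ρ hu huρ
  have : IsIso rest.eval := rest.isIso_eval_of_verts_subset hUW hrest
  simp only [Zig.eval, homOfLE_refl]
  infer_instance

/-- let `W` be a closed collection of face relations all of the form
`(σ ≤ τ)` with `σ ∈ U`, for an upward-closed set `U` of simplices such that all face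
relations out of members of `U` lie in `W`.  If `ζ` is a `W`-zigzag from `σ` to `τ`
whose underlying simplices after the first all lie in the open star of some member
of `U`, and the first forward relation of `ζ` is an equality, then `ζ` represents an
isomorphism in the localization `Fc_W(M)`. -/
theorem reduced_star_zigzag_iso (W : M → M → Prop) (U : Set M)
    (hface : ∀ σ τ, W σ τ → σ ≤ τ)
    (hclosed : ∀ σ τ ν, W σ τ → W τ ν → W σ ν)
    (hWU : ∀ σ τ, W σ τ → σ ∈ U)
    (hUup : ∀ σ σ' : M, σ ∈ U → σ ≤ σ' → σ' ∈ U)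
    (hUW : ∀ σ τ : M, σ ∈ U → σ ≤ τ → W σ τ)
    {σ τ : M} (rest : Zig W σ τ)
    (hverts : ∀ ρ ∈ rest.verts, ∃ u ∈ U, u ≤ ρ) :
    IsIso (Zig.fwd (le_refl σ) rest).eval :=
  reduced_star_zigzag_iso_general W U hUup hUW rest hverts
end
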